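/- Let $\bar{M}$ be a $D \times D$ real positive semidefinite matrix, let $L$ be a real $H \times D$ matrix, and let $\beta, \gamma > 0$. Then $2\sqrt{\beta\gamma}\,\mathrm{tr}\big((L \bar{M} L^{\top})^{1/2}\big) \leq \gamma\,\mathrm{tr}(\bar{M}) + \beta \|L\|_F^2$. -/

import Mathlib

open Matrix

noncomputable def Matrix.PosSemidef.sqrt {n : Type*} [Fintype n] [DecidableEq n]
    {A : Matrix n n ℝ} (h : A.PosSemidef) : Matrix n n ℝ :=
  (h.1.eigenvectorUnitary : Matrix n n ℝ) *
    diagonal ((↑) ∘ (√·) ∘ h.1.eigenvalues) *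
    (star h.1.eigenvectorUnitary : Matrix n n ℝ)

lemma Matrix.PosSemidef.posSemidef_sqrt {n : Type*} [Fintype n] [DecidableEq n]
    {A : Matrix n n ℝ} (h : A.PosSemidef) : h.sqrt.PosSemidef := by
  unfold Matrix.PosSemidef.sqrt
  have hd : (diagonal ((↑) ∘ (√·) ∘ h.1.eigenvalues) : Matrix n n ℝ).PosSemidef :=
    posSemidef_diagonal_iff.2 (fun i => by simp [Real.sqrt_nonneg])
  have := hd.mul_mul_conjTranspose_same (h.1.eigenvectorUnitary : Matrix n n ℝ)
  simpa [Matrix.star_eq_conjTranspose] using this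

lemma Matrix.PosSemidef.sqrt_mul_self {n : Type*} [Fintype n] [DecidableEq n]
    {A : Matrix n n ℝ} (h : A.PosSemidef) : h.sqrt * h.sqrt = A := by
  unfold Matrix.PosSemidef.sqrt
  have hU : (star h.1.eigenvectorUnitary : Matrix n n ℝ) * (h.1.eigenvectorUnitary : Matrix n n ℝ)
      = 1 := Unitary.coe_star_mul_self _
  calc _ = (h.1.eigenvectorUnitary : Matrix n n ℝ) *
        (diagonal ((↑) ∘ (√·) ∘ h.1.eigenvalues) *
          ((star h.1.eigenvectorUnitary : Matrix n n ℝ) * (h.1.eigenvectorUnitary : Matrix n n ℝ)) *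
          diagonal ((↑) ∘ (√·) ∘ h.1.eigenvalues)) *
        (star h.1.eigenvectorUnitary : Matrix n n ℝ) := by simp only [mul_assoc]
    _ = (h.1.eigenvectorUnitary : Matrix n n ℝ) * diagonal (RCLike.ofReal ∘ h.1.eigenvalues) *
        (star h.1.eigenvectorUnitary : Matrix n n ℝ) := by
      rw [hU, mul_one, diagonal_mul_diagonal]
      congr 2
      congr 1
      funext i
      simp [Real.mul_self_sqrt (h.eigenvalues_nonneg i)]
    _ = A := by
      conv_rhs => rw [h.1.spectral_theorem, Unitary.conjStarAlgAut_apply]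

private lemma trace_nonneg' {n : Type*} [Fintype n] [DecidableEq n] {A : Matrix n n ℝ}
    (hA : A.PosSemidef) : 0 ≤ A.trace := by
  rw [Matrix.trace]
  refine Finset.sum_nonneg fun i _ => ?_
  simpa [Matrix.diag, Matrix.mulVec_single, dotProduct, Pi.single_apply] using hA.diag_nonneg (i := i)

private lemma trace_mul_nonneg' {n : Type*} [Fintype n] [DecidableEq n]
    {A B : Matrix n n ℝ} (hA : A.PosSemidef) (hB : B.PosSemidef) :
    0 ≤ (A * B).trace := by
  have hs := hB.posSemidef_sqrt
  have h1 : A * B = A * hB.sqrt * hB.sqrt := by rw [mul_assoc, hB.sqrt_mul_self]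
  rw [h1, trace_mul_cycle]
  have h2 : (hB.sqrt * A * hB.sqrtᴴ).PosSemidef := hA.mul_mul_conjTranspose_same _
  rw [hs.isHermitian.eq] at h2
  exact trace_nonneg' h2

private lemma cs_trace {m n : Type*} [Fintype m] [Fintype n] [DecidableEq n]
    (X Y : Matrix m n ℝ) :
    2 * (Xᵀ * Y).trace ≤ (Xᵀ * X).trace + (Yᵀ * Y).trace := by
  have h0 := trace_nonneg' (Matrix.posSemidef_conjTranspose_mul_self (X - Y))
  rw [conjTranspose_eq_transpose_of_trivial] at h0
  have hYX : (Yᵀ * X).trace = (Xᵀ * Y).trace := by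
    rw [← Matrix.trace_transpose (Yᵀ * X), Matrix.transpose_mul, Matrix.transpose_transpose]
  have hexp : ((X - Y)ᵀ * (X - Y)).trace
      = (Xᵀ * X).trace - (Xᵀ * Y).trace - (Yᵀ * X).trace + (Yᵀ * Y).trace := by
    simp [Matrix.transpose_sub, Matrix.sub_mul, Matrix.mul_sub, Matrix.trace_sub]
    ring
  rw [hexp] at h0
  linarith


private lemma core {H D : ℕ} (Mbar : Matrix (Fin D) (Fin D) ℝ) (hMbar : Mbar.PosSemidef)
    (L : Matrix (Fin H) (Fin D) ℝ) (hA : (L * Mbar * Lᵀ).PosSemidef)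
    (c ε : ℝ) (hc : 0 < c) (hε : 0 < ε) :
    2 * hA.sqrt.trace ≤ c⁻¹ * Mbar.trace + c * (L * Lᵀ).trace + ε * H := by
  obtain ⟨L₂, hL2⟩ : ∃ X, X = Real.sqrt c • L := ⟨_, rfl⟩
  have hcc : Real.sqrt c * Real.sqrt c = c := Real.mul_self_sqrt hc.le
  have hL2L2 : L₂ * L₂ᵀ = c • (L * Lᵀ) := by
    rw [hL2, Matrix.transpose_smul, Matrix.smul_mul, Matrix.mul_smul, smul_smul, hcc]
  have hL2tL2 : L₂ᵀ * L₂ = c • (Lᵀ * L) := by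
    rw [hL2, Matrix.transpose_smul, Matrix.smul_mul, Matrix.mul_smul, smul_smul, hcc]
  obtain ⟨T, hTdef⟩ : ∃ X, X = L₂ * L₂ᵀ + ε • (1 : Matrix (Fin H) (Fin H) ℝ) := ⟨_, rfl⟩
  obtain ⟨N, hNdef⟩ : ∃ X, X = L₂ᵀ * L₂ + ε • (1 : Matrix (Fin D) (Fin D) ℝ) := ⟨_, rfl⟩
  have hT : T.PosDef := by
    rw [hTdef]
    refine Matrix.PosDef.posSemidef_add ?_ ?_
    · have := Matrix.posSemidef_self_mul_conjTranspose L₂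
      rwa [conjTranspose_eq_transpose_of_trivial] at this
    · rw [smul_one_eq_diagonal]; exact .diagonal fun _ => hε
  have hN : N.PosDef := by
    rw [hNdef]
    refine Matrix.PosDef.posSemidef_add ?_ ?_
    · have := Matrix.posSemidef_conjTranspose_mul_self L₂
      rwa [conjTranspose_eq_transpose_of_trivial] at this
    · rw [smul_one_eq_diagonal]; exact .diagonal fun _ => hε
  have hTd : IsUnit T.det := (Matrix.isUnit_iff_isUnit_det T).1 hT.isUnit
  have hNd : IsUnit N.det := (Matrix.isUnit_iff_isUnit_det N).1 hN.isUnit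
  have push : L₂ᵀ * T = N * L₂ᵀ := by
    rw [hTdef, hNdef, Matrix.mul_add, Matrix.add_mul, Matrix.mul_smul, Matrix.smul_mul,
      Matrix.mul_one, Matrix.one_mul, Matrix.mul_assoc]
  have h1 : L₂ᵀ * T⁻¹ = N⁻¹ * L₂ᵀ := by
    calc L₂ᵀ * T⁻¹ = N⁻¹ * (N * (L₂ᵀ * T⁻¹)) := by
          rw [← Matrix.mul_assoc, Matrix.nonsing_inv_mul _ hNd, Matrix.one_mul]
      _ = N⁻¹ * (L₂ᵀ * T * T⁻¹) := by
          congr 1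
          rw [← Matrix.mul_assoc, ← push]
      _ = N⁻¹ * L₂ᵀ := by rw [Matrix.mul_nonsing_inv_cancel_right _ _ hTd]
  have hNL : L₂ᵀ * L₂ = N - ε • 1 := by rw [hNdef]; abel
  have hLTL : L₂ᵀ * T⁻¹ * L₂ = 1 - ε • N⁻¹ := by
    rw [h1, Matrix.mul_assoc, hNL, Matrix.mul_sub, Matrix.nonsing_inv_mul _ hNd,
      Matrix.mul_smul, Matrix.mul_one]
  -- express Lᵀ T⁻¹ L
  have hLTL' : Lᵀ * T⁻¹ * L = c⁻¹ • ((1 : Matrix (Fin D) (Fin D) ℝ) - ε • N⁻¹) := by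
    have h2 : L₂ᵀ * T⁻¹ * L₂ = c • (Lᵀ * T⁻¹ * L) := by
      rw [hL2]
      simp [Matrix.transpose_smul, Matrix.smul_mul, Matrix.mul_smul, smul_smul, hcc,
        Matrix.mul_assoc]
    rw [h2] at hLTL
    rw [eq_inv_smul_iff₀ hc.ne']
    exact hLTL
  obtain ⟨W, hW⟩ : ∃ X : Matrix (Fin H) (Fin H) ℝ, X = hT.posSemidef.sqrt := ⟨_, rfl⟩
  have hWW : W * W = T := by rw [hW]; exact hT.posSemidef.sqrt_mul_self
  have hWt : Wᵀ = W := by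
    rw [hW, ← conjTranspose_eq_transpose_of_trivial]
    exact hT.posSemidef.posSemidef_sqrt.isHermitian
  have hWdet : IsUnit W.det := by
    have hdet : W.det * W.det = T.det := by rw [← Matrix.det_mul, hWW]
    have h := hTd
    rw [← hdet] at h
    exact isUnit_of_mul_isUnit_left h
  have hRR : W⁻¹ * W⁻¹ = T⁻¹ := by rw [← Matrix.mul_inv_rev, hWW]
  have hRt : (W⁻¹)ᵀ = W⁻¹ := by rw [Matrix.transpose_nonsing_inv, hWt]
  have hSS : hA.sqrt * hA.sqrt = L * Mbar * Lᵀ := hA.sqrt_mul_self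
  have hSt : hA.sqrtᵀ = hA.sqrt := by
    rw [← conjTranspose_eq_transpose_of_trivial]
    exact hA.posSemidef_sqrt.isHermitian
  have est := cs_trace W (W⁻¹ * hA.sqrt)
  rw [hWt] at est
  have hWRS : W * (W⁻¹ * hA.sqrt) = hA.sqrt := by
    rw [← Matrix.mul_assoc, Matrix.mul_nonsing_inv _ hWdet, Matrix.one_mul]
  rw [hWRS, hWW] at est
  have hTtr : T.trace = c * (L * Lᵀ).trace + ε * H := by
    rw [hTdef, Matrix.trace_add, hL2L2, Matrix.trace_smul, Matrix.trace_smul,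
      Matrix.trace_one, smul_eq_mul, smul_eq_mul, Fintype.card_fin]
  have h2nd : ((W⁻¹ * hA.sqrt)ᵀ * (W⁻¹ * hA.sqrt)).trace
      = c⁻¹ * (Mbar.trace - ε * (N⁻¹ * Mbar).trace) := by
    rw [Matrix.transpose_mul, hRt, hSt]
    have e1 : hA.sqrt * W⁻¹ * (W⁻¹ * hA.sqrt) = hA.sqrt * T⁻¹ * hA.sqrt := by
      rw [Matrix.mul_assoc, ← Matrix.mul_assoc W⁻¹, hRR, ← Matrix.mul_assoc]
    rw [e1, Matrix.trace_mul_cycle, hSS]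
    have e2 : (L * Mbar * Lᵀ * T⁻¹).trace = (Lᵀ * T⁻¹ * L * Mbar).trace := by
      rw [Matrix.mul_assoc (L * Mbar), Matrix.trace_mul_comm, ← Matrix.mul_assoc]
    rw [e2, hLTL', Matrix.smul_mul, Matrix.trace_smul, smul_eq_mul, Matrix.sub_mul,
      Matrix.one_mul, Matrix.smul_mul, Matrix.trace_sub, Matrix.trace_smul, smul_eq_mul]
  have hNM : 0 ≤ (N⁻¹ * Mbar).trace := trace_mul_nonneg' hN.inv.posSemidef hMbar
  rw [hTtr, h2nd] at est
  have hci : 0 < c⁻¹ := by positivity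
  nlinarith [mul_nonneg hci.le (mul_nonneg hε.le hNM)]

/-- The (unique) positive semidefinite square root of a real positive semidefinite
matrix (junk value `0` if the matrix is not positive semidefinite). -/
noncomputable def psdSqrt {n : ℕ} (A : Matrix (Fin n) (Fin n) ℝ) : Matrix (Fin n) (Fin n) ℝ :=
  letI := Classical.propDecidable A.PosSemidef
  if h : A.PosSemidef then
    (h.1.eigenvectorUnitary : Matrix (Fin n) (Fin n) ℝ) *
      diagonal ((↑) ∘ (√·) ∘ h.1.eigenvalues) *
      (star h.1.eigenvectorUnitary : Matrix (Fin n) (Fin n) ℝ)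
  else 0

/-- Key inequality in the proof of Proposition 1:
`2 √(βγ) tr((L M̄ Lᵀ)^{1/2}) ≤ γ tr(M̄) + β ‖L‖_F²`. -/
theorem stmt_3 {H D : ℕ}
    (Mbar : Matrix (Fin D) (Fin D) ℝ) (hMbar : Mbar.PosSemidef)
    (L : Matrix (Fin H) (Fin D) ℝ)
    (β γ : ℝ) (hβ : 0 < β) (hγ : 0 < γ) :
    2 * Real.sqrt (β * γ) * (psdSqrt (L * Mbar * Lᵀ)).trace ≤
      γ * Mbar.trace + β * (L * Lᵀ).trace := by
  have hA : (L * Mbar * Lᵀ).PosSemidef := by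
    have := hMbar.mul_mul_conjTranspose_same L
    rwa [conjTranspose_eq_transpose_of_trivial] at this
  have hps : psdSqrt (L * Mbar * Lᵀ) = hA.sqrt := by
    simp only [psdSqrt]
    rw [dif_pos hA]
    rfl
  rw [hps]
  have hsb : 0 < Real.sqrt β := Real.sqrt_pos.2 hβ
  have hsg : 0 < Real.sqrt γ := Real.sqrt_pos.2 hγ
  have hsbg : Real.sqrt (β * γ) = Real.sqrt β * Real.sqrt γ := Real.sqrt_mul hβ.le γ
  have hbb : Real.sqrt β * Real.sqrt β = β := Real.mul_self_sqrt hβ.le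
  have hgg : Real.sqrt γ * Real.sqrt γ = γ := Real.mul_self_sqrt hγ.le
  have hc : 0 < Real.sqrt β / Real.sqrt γ := by positivity
  have hc1 : Real.sqrt (β * γ) * (Real.sqrt β / Real.sqrt γ)⁻¹ = γ := by
    rw [hsbg]
    field_simp
    linear_combination hgg
  have hc2 : Real.sqrt (β * γ) * (Real.sqrt β / Real.sqrt γ) = β := by
    rw [hsbg]
    field_simp
    linear_combination hbb
  have hs : 0 < Real.sqrt (β * γ) := by rw [hsbg]; positivity
  refine le_of_forall_pos_le_add fun ε' hε' => ?_
  have hd : (0:ℝ) < Real.sqrt (β * γ) * H + 1 := by positivity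
  have hε : 0 < ε' / (Real.sqrt (β * γ) * H + 1) := by positivity
  have hcore := core Mbar hMbar L hA (Real.sqrt β / Real.sqrt γ)
    (ε' / (Real.sqrt (β * γ) * H + 1)) hc hε
  have hle : Real.sqrt (β * γ) * (ε' / (Real.sqrt (β * γ) * H + 1)) * H ≤ ε' := by
    have h1 : Real.sqrt (β * γ) * (ε' / (Real.sqrt (β * γ) * H + 1)) * H
        = ε' * ((Real.sqrt (β * γ) * H) / (Real.sqrt (β * γ) * H + 1)) := by
      field_simp
    have h2 : (Real.sqrt (β * γ) * H) / (Real.sqrt (β * γ) * H + 1) ≤ 1 := by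
      rw [div_le_one hd]
      linarith
    calc Real.sqrt (β * γ) * (ε' / (Real.sqrt (β * γ) * H + 1)) * H
        = ε' * ((Real.sqrt (β * γ) * H) / (Real.sqrt (β * γ) * H + 1)) := h1
      _ ≤ ε' * 1 := mul_le_mul_of_nonneg_left h2 hε'.le
      _ = ε' := mul_one _
  calc 2 * Real.sqrt (β * γ) * hA.sqrt.trace
      = Real.sqrt (β * γ) * (2 * hA.sqrt.trace) := by ring
    _ ≤ Real.sqrt (β * γ) * ((Real.sqrt β / Real.sqrt γ)⁻¹ * Mbar.trace
          + (Real.sqrt β / Real.sqrt γ) * (L * Lᵀ).trace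
          + (ε' / (Real.sqrt (β * γ) * H + 1)) * H) :=
        mul_le_mul_of_nonneg_left hcore hs.le
    _ = γ * Mbar.trace + β * (L * Lᵀ).trace
          + Real.sqrt (β * γ) * (ε' / (Real.sqrt (β * γ) * H + 1)) * H := by
        linear_combination Mbar.trace * hc1 + (L * Lᵀ).trace * hc2
    _ ≤ γ * Mbar.trace + β * (L * Lᵀ).trace + ε' := by linarith
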